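/- arXiv:1207.2248 — 2 statements merged into one kernel-verified Lean document; each statement's English description precedes it below -/
import Mathlib

section
/- There exists a non-increasing sequence (r_n) of non-negative reals converging to 0 such that limsup_n (1/log n) Σ_{j=1}^n r_j² < 1/2 but sup_n n r_n² = ∞, i.e. (r_n) does not belong to the Lorentz space ℓ_{2,∞}. -/
/-!
Take blocks `(N (k - 1), N k]` with `N k = 2 ^ (k + 1) ^ 3` and let `r j ^ 2 = (k + 1) / N k` on
the `k`-th block. Then `N k * r (N k) ^ 2 = k + 1` is unbounded, while the partial sums up to the
end of block `k` are at most `∑_{i ≤ k} N i * (i + 1) / N i ≤ (k + 1) ^ 2`. Since every `n` in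
block `k ≥ 1` exceeds `N (k - 1)`, `log n ≥ k ^ 3 log 2`, so the normalized sums are `O(1 / k)`
and tend to `0`.
-/

open Filter Finset

section BlockIndex

variable {N : ℕ → ℕ}

/-- The `k` with `n ∈ (N (k - 1), N k]`, for a strictly increasing `N`. -/
noncomputable def blockIndex (N : ℕ → ℕ) (n : ℕ) : ℕ := sInf {k | n ≤ N k}

theorem gc_blockIndex (hN : StrictMono N) : GaloisConnection (blockIndex N) N := fun n _ =>
  ⟨fun h => (Nat.sInf_mem (s := {k | n ≤ N k}) ⟨_, hN.le_apply⟩).trans (hN.monotone h),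
    fun h => Nat.sInf_le h⟩

theorem lt_blockIndex_iff (hN : StrictMono N) {n k : ℕ} : k < blockIndex N n ↔ N k < n := by
  simpa only [not_le] using ((gc_blockIndex hN) n k).not

theorem blockIndex_apply (hN : StrictMono N) (k : ℕ) : blockIndex N (N k) = k :=
  le_antisymm ((gc_blockIndex hN).l_u_le k) (hN.le_iff_le.mp ((gc_blockIndex hN).le_u_l (N k)))

theorem tendsto_blockIndex (hN : StrictMono N) : Tendsto (blockIndex N) atTop atTop :=
  tendsto_atTop_atTop.2 fun k =>
    ⟨N k + 1, fun _ hn => ((lt_blockIndex_iff hN).2 (Nat.lt_of_succ_le hn)).le⟩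

theorem sum_comp_blockIndex_le (hN : StrictMono N) {c : ℕ → ℝ} (hc : ∀ k, 0 ≤ c k)
    (n : ℕ) :
    ∑ j ∈ Icc 1 n, c (blockIndex N j) ≤ ∑ i ∈ range (blockIndex N n + 1), N i * c i := by
  have hmaps : ∀ j ∈ Icc 1 n, blockIndex N j ∈ range (blockIndex N n + 1) := fun j hj =>
    mem_range.2 (Nat.lt_succ_of_le ((gc_blockIndex hN).monotone_l (mem_Icc.1 hj).2))
  rw [← sum_fiberwise_of_maps_to hmaps]
  gcongr with i
  have hfiber : {j ∈ Icc 1 n | blockIndex N j = i} ⊆ Icc 1 (N i) := fun j hj => by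
    obtain ⟨hjn, rfl⟩ := mem_filter.1 hj
    exact mem_Icc.2 ⟨(mem_Icc.1 hjn).1, (gc_blockIndex hN).le_u_l j⟩
  calc ∑ j ∈ Icc 1 n with blockIndex N j = i, c (blockIndex N j)
      = #{j ∈ Icc 1 n | blockIndex N j = i} • c i := by
        rw [← sum_const]
        exact sum_congr rfl fun j hj => by rw [(mem_filter.1 hj).2]
    _ ≤ N i * c i := by
        rw [nsmul_eq_mul]
        gcongr
        · exact hc i
        · simpa using card_le_card hfiber

end BlockIndex

def blockEnd (k : ℕ) : ℕ := 2 ^ (k + 1) ^ 3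

theorem blockEnd_strictMono : StrictMono blockEnd := fun _ _ h =>
  Nat.pow_lt_pow_right (by norm_num) (Nat.pow_lt_pow_left (by omega) (by norm_num))

theorem two_mul_blockEnd_le (k : ℕ) : 2 * blockEnd k ≤ blockEnd (k + 1) := by
  rw [blockEnd, blockEnd, ← pow_succ']
  exact Nat.pow_le_pow_right (by norm_num)
    (Nat.succ_le_of_lt (Nat.pow_lt_pow_left (by omega) (by norm_num)))

theorem sq_le_blockEnd (k : ℕ) : (k + 1) ^ 2 ≤ blockEnd k :=
  (Nat.pow_le_pow_right k.succ_pos (by norm_num)).trans Nat.lt_two_pow_self.le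

theorem blockEnd_pos (k : ℕ) : 0 < blockEnd k :=
  Nat.two_pow_pos _

theorem log_blockEnd (k : ℕ) : Real.log (blockEnd k) = (k + 1) ^ 3 * Real.log 2 := by
  rw [blockEnd, Nat.cast_pow, Real.log_pow]
  push_cast
  ring

noncomputable def blockValue (k : ℕ) : ℝ := (k + 1) / blockEnd k

theorem blockValue_nonneg (k : ℕ) : 0 ≤ blockValue k := by
  unfold blockValue
  positivity

theorem blockEnd_mul_blockValue (k : ℕ) : (blockEnd k : ℝ) * blockValue k = k + 1 :=
  mul_div_cancel₀ _ (by exact_mod_cast (blockEnd_pos k).ne')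

theorem antitone_blockValue : Antitone blockValue := by
  refine antitone_nat_of_succ_le fun k => ?_
  have hE : (0 : ℝ) < blockEnd k := by exact_mod_cast blockEnd_pos k
  have hE' : 2 * (blockEnd k : ℝ) ≤ blockEnd (k + 1) := by exact_mod_cast two_mul_blockEnd_le k
  rw [blockValue, blockValue, div_le_div_iff₀ (by linarith) hE]
  push_cast
  nlinarith [k.cast_nonneg (α := ℝ)]

theorem blockValue_le (k : ℕ) : blockValue k ≤ 1 / (k + 1) := by
  have hsq : ((k : ℝ) + 1) ^ 2 ≤ blockEnd k := by exact_mod_cast sq_le_blockEnd k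
  rw [blockValue, div_le_div_iff₀ (by exact_mod_cast blockEnd_pos k) (by positivity)]
  nlinarith

theorem tendsto_blockValue : Tendsto blockValue atTop (nhds 0) :=
  squeeze_zero blockValue_nonneg blockValue_le tendsto_one_div_add_atTop_nhds_zero_nat

/-- The paper's `r_j`, with `n_k = blockEnd (k - 1)`. -/
noncomputable def blockSeq (n : ℕ) : ℝ := √(blockValue (blockIndex blockEnd n))

theorem blockSeq_sq (n : ℕ) : blockSeq n ^ 2 = blockValue (blockIndex blockEnd n) :=
  Real.sq_sqrt (blockValue_nonneg _)

theorem antitone_blockSeq : Antitone blockSeq := fun _ _ h =>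
  Real.sqrt_le_sqrt (antitone_blockValue ((gc_blockIndex blockEnd_strictMono).monotone_l h))

theorem tendsto_blockSeq : Tendsto blockSeq atTop (nhds 0) := by
  have h := (tendsto_blockValue.comp (tendsto_blockIndex blockEnd_strictMono)).sqrt
  rwa [Real.sqrt_zero] at h

theorem sum_blockSeq_sq_le (n : ℕ) :
    ∑ j ∈ Icc 1 n, blockSeq j ^ 2 ≤ ((blockIndex blockEnd n : ℝ) + 1) ^ 2 := by
  simp only [blockSeq_sq]
  refine (sum_comp_blockIndex_le blockEnd_strictMono blockValue_nonneg n).trans ?_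
  refine (sum_le_card_nsmul _ _ ((blockIndex blockEnd n : ℝ) + 1) fun i hi => ?_).trans ?_
  · rw [blockEnd_mul_blockValue]
    exact_mod_cast mem_range.1 hi
  · rw [card_range, nsmul_eq_mul]
    push_cast
    exact (sq _).ge

theorem blockIndex_pow_three_mul_log_two_le (n : ℕ) :
    (blockIndex blockEnd n : ℝ) ^ 3 * Real.log 2 ≤ Real.log n := by
  rcases h : blockIndex blockEnd n with _ | k
  · simpa using Real.log_natCast_nonneg n
  · have hlt : blockEnd k < n := (lt_blockIndex_iff blockEnd_strictMono).1 (by omega)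
    rw [Nat.cast_succ, ← log_blockEnd]
    exact Real.log_le_log (by exact_mod_cast blockEnd_pos k) (by exact_mod_cast hlt.le)

theorem sum_blockSeq_sq_div_log_le {n : ℕ} (hn : 0 < blockIndex blockEnd n) :
    1 / Real.log n * ∑ j ∈ Icc 1 n, blockSeq j ^ 2 ≤ 8 / blockIndex blockEnd n := by
  have hk : (1 : ℝ) ≤ blockIndex blockEnd n := by exact_mod_cast hn
  have hsum := sum_blockSeq_sq_le n
  have hlog := blockIndex_pow_three_mul_log_two_le n
  generalize (blockIndex blockEnd n : ℝ) = k at *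
  have hlog2 : 1 / 2 < Real.log 2 := by linarith [Real.log_two_gt_d9]
  have hlogn : 0 < Real.log n := lt_of_lt_of_le (by positivity) hlog
  rw [one_div_mul_eq_div, div_le_div_iff₀ hlogn (by positivity)]
  calc (∑ j ∈ Icc 1 n, blockSeq j ^ 2) * k ≤ (k + 1) ^ 2 * k := by gcongr
    _ ≤ (2 * k) ^ 2 * k := by gcongr; linarith
    _ = 8 * (k ^ 3 * (1 / 2)) := by ring
    _ ≤ 8 * Real.log n := by
        gcongr
        exact (mul_le_mul_of_nonneg_left hlog2.le (by positivity)).trans hlog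

theorem tendsto_sum_blockSeq_sq_div_log :
    Tendsto (fun n : ℕ => 1 / Real.log n * ∑ j ∈ Icc 1 n, blockSeq j ^ 2) atTop (nhds 0) := by
  have hindex := tendsto_blockIndex blockEnd_strictMono
  refine squeeze_zero' (Eventually.of_forall fun n => by positivity) ?_
    ((tendsto_const_div_atTop_nhds_zero_nat 8).comp hindex)
  filter_upwards [hindex.eventually_gt_atTop 0] with n hn
  exact sum_blockSeq_sq_div_log_le hn

/-- There is a non-increasing nonnegative null sequence `(r_n)` with
`limsup (1/log n) Σ_{j=1}^n r_j² < 1/2` which does not belong to the Lorentz space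
`ℓ_{2,∞}`, i.e. `sup_n n r_n² = ∞`. -/
theorem exists_mon_not_lorentz :
    ∃ r : ℕ → ℝ, (∀ n, 0 ≤ r n) ∧ Antitone r ∧ Tendsto r atTop (nhds 0) ∧
      Filter.limsup
          (fun n : ℕ =>
            (((1 / Real.log n) * ∑ j ∈ Finset.Icc 1 n, r j ^ 2 : ℝ) : EReal)) atTop
        < ((1 : ℝ) / 2 : EReal) ∧
      ∀ K : ℝ, ∃ n : ℕ, K ≤ (n : ℝ) * r n ^ 2 := by
  refine ⟨blockSeq, fun _ => Real.sqrt_nonneg _, antitone_blockSeq, tendsto_blockSeq, ?_,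
    fun K => ?_⟩
  · rw [(EReal.tendsto_coe.2 tendsto_sum_blockSeq_sq_div_log).limsup_eq]
    exact EReal.div_pos (by norm_num) (by norm_num) (EReal.coe_ne_top 2)
  · obtain ⟨k, hk⟩ := exists_nat_ge K
    refine ⟨blockEnd k, ?_⟩
    rw [blockSeq_sq, blockIndex_apply blockEnd_strictMono, blockEnd_mul_blockValue]
    linarith
end

section
/- For every z in ℓ₂ with ‖z‖∞ < 1 and every family (c_α)_{α ∈ ℕ₀^(ℕ)} of complex numbers with Σ_α |c_α|² < ∞, we have Σ_α |c_α z^α| ≤ (Σ_α |c_α|²)^{1/2} · (Π_{n=1}^∞ 1/(1 − |z_n|²))^{1/2} < ∞. -/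
/-!
By Cauchy–Schwarz it suffices to bound `Σ_α r^α` by `Π_n (1 - r_n)⁻¹` for `r_n = |z_n|²`. A finite
set of multi-indices, all supported in a finite `N`, is contained in a box whose sum expands as
`Π_{n ∈ N} Σ_k r_n^k`, and each factor is a partial geometric series, at most `(1 - r_n)⁻¹`. These
finite products stay below the infinite one, which converges since `Σ_n log (1 - r_n)⁻¹` does for
`r ∈ ℓ¹`.
-/

open Finset Real

theorem Finset.prod_sum_finsupp {ι α R : Type*} [Zero α] [CommSemiring R] (s : Finset ι)
    (t : ι → Finset α) (f : ι → α → R) :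
    ∏ i ∈ s, ∑ a ∈ t i, f i a = ∑ g ∈ s.finsupp t, ∏ i ∈ s, f i (g i) := by
  classical
  rw [Finset.finsupp, sum_map, prod_sum]
  refine sum_congr rfl fun p _ => ?_
  rw [← prod_attach s]
  refine prod_congr rfl fun i _ => ?_
  simp [Finsupp.indicator_of_mem i.2]

lemma Real.prod_le_tprod_of_one_le {ι : Type*} {f : ι → ℝ} (hf : ∀ i, 1 ≤ f i)
    (hlog : Summable fun i => log (f i)) (s : Finset ι) : ∏ i ∈ s, f i ≤ ∏' i, f i := by
  have hpos : ∀ i, 0 < f i := fun i => one_pos.trans_le (hf i)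
  rw [← rexp_tsum_eq_tprod hpos hlog, ← prod_congr rfl fun i _ => exp_log (hpos i), ← exp_sum]
  exact exp_le_exp.2 (hlog.sum_le_tsum s fun i _ => log_nonneg (hf i))

lemma sum_pow_le_inv_one_sub {x : ℝ} (hx0 : 0 ≤ x) (hx1 : x < 1) (K : Finset ℕ) :
    ∑ k ∈ K, x ^ k ≤ (1 - x)⁻¹ :=
  tsum_geometric_of_lt_one hx0 hx1 ▸
    (summable_geometric_of_lt_one hx0 hx1).sum_le_tsum K fun k _ => pow_nonneg hx0 k

section Monomials

variable {ι : Type*} {r : ι → ℝ}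

lemma sum_finsupp_prod_pow_le_prod_inv_one_sub [DecidableEq ι] (hr0 : ∀ n, 0 ≤ r n)
    (hr1 : ∀ n, r n < 1) (S : Finset (ι →₀ ℕ)) :
    ∑ α ∈ S, α.prod (fun n k => r n ^ k) ≤ ∏ n ∈ S.sup Finsupp.support, (1 - r n)⁻¹ := by
  set N := S.sup Finsupp.support
  have hsupp : ∀ α ∈ S, α.support ⊆ N := fun α hα => le_sup hα
  calc ∑ α ∈ S, α.prod (fun n k => r n ^ k) = ∑ α ∈ S, ∏ n ∈ N, r n ^ α n :=
        sum_congr rfl fun α hα =>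
          Finsupp.prod_of_support_subset α (hsupp α hα) _ fun _ _ => pow_zero _
    _ ≤ ∑ α ∈ N.finsupp (fun n => S.image (· n)), ∏ n ∈ N, r n ^ α n :=
        sum_le_sum_of_subset_of_nonneg
          (fun α hα => mem_finsupp_iff.2 ⟨hsupp α hα, fun n _ => mem_image_of_mem _ hα⟩)
          fun α _ _ => prod_nonneg fun n _ => pow_nonneg (hr0 n) _
    _ = ∏ n ∈ N, ∑ k ∈ S.image (· n), r n ^ k := (prod_sum_finsupp ..).symm
    _ ≤ ∏ n ∈ N, (1 - r n)⁻¹ :=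
        prod_le_prod (fun n _ => sum_nonneg fun k _ => pow_nonneg (hr0 n) k)
          fun n _ => sum_pow_le_inv_one_sub (hr0 n) (hr1 n) _

lemma summable_log_inv_one_sub (hr : Summable r) : Summable fun n => log ((1 - r n)⁻¹) := by
  simpa [log_inv, sub_eq_add_neg] using (summable_log_one_add_of_summable hr.neg).neg

theorem summable_finsupp_prod_pow_and_tsum_le (hr0 : ∀ n, 0 ≤ r n) (hr1 : ∀ n, r n < 1)
    (hr : Summable r) :
    Summable (fun α : ι →₀ ℕ => α.prod fun n k => r n ^ k) ∧
      ∑' α : ι →₀ ℕ, α.prod (fun n k => r n ^ k) ≤ ∏' n, (1 - r n)⁻¹ := by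
  classical
  have hle : ∀ S : Finset (ι →₀ ℕ), ∑ α ∈ S, α.prod (fun n k => r n ^ k) ≤ ∏' n, (1 - r n)⁻¹ :=
    fun S => (sum_finsupp_prod_pow_le_prod_inv_one_sub hr0 hr1 S).trans <|
      prod_le_tprod_of_one_le
        (fun n => (one_le_inv₀ (sub_pos.2 (hr1 n))).2 (by linarith [hr0 n]))
        (summable_log_inv_one_sub hr) _
  have hnonneg : 0 ≤ fun α : ι →₀ ℕ => α.prod fun n k => r n ^ k :=
    fun α => prod_nonneg fun n _ => pow_nonneg (hr0 n) _
  exact ⟨summable_of_sum_le hnonneg hle, tsum_le_of_sum_le hnonneg hle⟩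

end Monomials

lemma bddAbove_range_of_summable_sq {ι : Type*} {f : ι → ℝ} (hf : Summable fun i => f i ^ 2) :
    BddAbove (Set.range f) :=
  ⟨√(∑' i, f i ^ 2), by
    rintro _ ⟨i, rfl⟩
    exact (le_abs_self _).trans (abs_le_sqrt (hf.le_tsum i fun j _ => sq_nonneg (f j)))⟩

lemma summable_and_inner_le_L2_mul_L2_tsum_of_nonneg {ι : Type*} {f g : ι → ℝ}
    (hf : ∀ i, 0 ≤ f i) (hg : ∀ i, 0 ≤ g i) (hf_sum : Summable fun i => f i ^ 2)
    (hg_sum : Summable fun i => g i ^ 2) :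
    (Summable fun i => f i * g i) ∧
      ∑' i, f i * g i ≤ (∑' i, f i ^ 2) ^ ((1 : ℝ) / 2) * (∑' i, g i ^ 2) ^ ((1 : ℝ) / 2) := by
  simp_rw [← rpow_two] at hf_sum hg_sum ⊢
  exact summable_and_inner_le_Lp_mul_Lq_tsum_of_nonneg .two_two hf hg hf_sum hg_sum

/-- For `z ∈ ℓ₂` with `‖z‖∞ < 1` and square-summable coefficients `(c_α)`,
`Σ_α |c_α z^α| ≤ (Σ_α |c_α|²)^{1/2} (Π_n 1/(1-|z_n|²))^{1/2} < ∞`. -/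
theorem cauchy_schwarz_monomials (z : ℕ → ℂ)
    (hz2 : Summable fun n => ‖z n‖ ^ 2)
    (hzsup : (⨆ n, ‖z n‖) < 1)
    (c : (ℕ →₀ ℕ) → ℂ) (hc : Summable fun α => ‖c α‖ ^ 2) :
    Summable (fun α : ℕ →₀ ℕ =>
        ‖c α‖ * ∏ n ∈ α.support, ‖z n‖ ^ α n)
      ∧ (∑' α : ℕ →₀ ℕ, ‖c α‖ * ∏ n ∈ α.support, ‖z n‖ ^ α n)
        ≤ (∑' α : ℕ →₀ ℕ, ‖c α‖ ^ 2) ^ ((1 : ℝ) / 2) *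
          (∏' n : ℕ, (1 - ‖z n‖ ^ 2)⁻¹) ^ ((1 : ℝ) / 2) := by
  have hz1 (n : ℕ) : ‖z n‖ < 1 := (le_ciSup (bddAbove_range_of_summable_sq hz2) n).trans_lt hzsup
  have hsq (α : ℕ →₀ ℕ) :
      (∏ n ∈ α.support, ‖z n‖ ^ α n) ^ 2 = α.prod fun n k => (‖z n‖ ^ 2) ^ k := by
    rw [Finsupp.prod, ← prod_pow]
    exact prod_congr rfl fun n _ => pow_right_comm ..
  obtain ⟨hmono_sum, hmono_le⟩ := summable_finsupp_prod_pow_and_tsum_le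
    (fun n => sq_nonneg ‖z n‖) (fun n => pow_lt_one₀ (norm_nonneg _) (hz1 n) two_ne_zero) hz2
  simp_rw [← hsq] at hmono_sum hmono_le
  obtain ⟨hsum, hle⟩ := summable_and_inner_le_L2_mul_L2_tsum_of_nonneg
    (fun α => norm_nonneg (c α)) (fun α => prod_nonneg fun n _ => by positivity) hc hmono_sum
  refine ⟨hsum, hle.trans ?_⟩
  gcongr
end
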